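/- Let n ≥ 1, l ∈ (ℤ∖{0})^n, and 1 ≤ k ≤ n. Let r^{(1)} = l, r^{(2)}, …, r^{(n)} ∈ ℤ^n be linearly independent, and let m^{(1)}, …, m^{(n−k)} ∈ ℤ^n be linearly independent with r^{(i)} · m^{(j)} = 0 for all i = 1,…,k and j = 1,…,n−k. Define F_i = J_{r^{(i)}} for i = 1,…,n and F_{n+j} = Im R_{m^{(j)}} for j = 1,…,n−k. Then {F_i, F_j} = 0 for all i ∈ {1,…,k} and all j ∈ {1,…,2n−k}, and the 2n−k functions F_1, …, F_{2n−k} are functionally independent; i.e. F^{(k)} = (F_1,…,F_{2n−k}) is an integrable set with the k central elements (J_{r^{(1)}}, …, J_{r^{(k)}}). -/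

import Mathlib

noncomputable section

open Complex

/-- Phase space `ℝ^{2n}`: a point is a pair `(x, p)` of vectors in `ℝ^n`. -/
abbrev Phase (n : ℕ) : Type := (Fin n → ℝ) × (Fin n → ℝ)

/-- Poisson bracket of complex-valued functions on phase space:
`{f,g} = ∑ j (∂f/∂p_j ∂g/∂x_j − ∂f/∂x_j ∂g/∂p_j)`. -/
def pb {n : ℕ} (f g : Phase n → ℂ) : Phase n → ℂ := fun w =>
  ∑ j : Fin n,
    (fderiv ℝ f w ((0 : Fin n → ℝ), Pi.single j (1 : ℝ)) *
        fderiv ℝ g w (Pi.single j (1 : ℝ), (0 : Fin n → ℝ)) -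
      fderiv ℝ f w (Pi.single j (1 : ℝ), (0 : Fin n → ℝ)) *
        fderiv ℝ g w ((0 : Fin n → ℝ), Pi.single j (1 : ℝ)))

/-- Poisson bracket of real-valued functions on phase space. -/
def pbR {n : ℕ} (f g : Phase n → ℝ) : Phase n → ℝ := fun w =>
  ∑ j : Fin n,
    (fderiv ℝ f w ((0 : Fin n → ℝ), Pi.single j (1 : ℝ)) *
        fderiv ℝ g w (Pi.single j (1 : ℝ), (0 : Fin n → ℝ)) -
      fderiv ℝ f w (Pi.single j (1 : ℝ), (0 : Fin n → ℝ)) *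
        fderiv ℝ g w ((0 : Fin n → ℝ), Pi.single j (1 : ℝ)))

/-- `z_j = (x_j + i p_j)/√2`. -/
def zf {n : ℕ} (j : Fin n) (w : Phase n) : ℂ :=
  ((w.1 j : ℂ) + Complex.I * (w.2 j : ℂ)) / ((Real.sqrt 2 : ℝ) : ℂ)

/-- `z̄_j = (x_j − i p_j)/√2`. -/
def zbf {n : ℕ} (j : Fin n) (w : Phase n) : ℂ :=
  ((w.1 j : ℂ) - Complex.I * (w.2 j : ℂ)) / ((Real.sqrt 2 : ℝ) : ℂ)

/-- `I_j = z_j z̄_j` (complex-valued; its values are real). -/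
def Iact {n : ℕ} (j : Fin n) (w : Phase n) : ℂ := zf j w * zbf j w

/-- `I_j = (x_j² + p_j²)/2` (real-valued). -/
def IR {n : ℕ} (j : Fin n) (w : Phase n) : ℝ := (w.1 j ^ 2 + w.2 j ^ 2) / 2

/-- A family of real functions on phase space is functionally independent if their
differentials are linearly independent at every point of some dense open set. -/
def FunctionallyIndependent {n : ℕ} {ι : Type*} (f : ι → Phase n → ℝ) : Prop :=
  ∃ U : Set (Phase n), IsOpen U ∧ Dense U ∧
    ∀ w ∈ U, LinearIndependent ℝ (fun i => fderiv ℝ (f i) w)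

/-- The monomial `P_{a,b} = ∏_j z_j^{a_j} z̄_j^{b_j}`. -/
def Pab {n : ℕ} (a b : Fin n → ℕ) (w : Phase n) : ℂ :=
  ∏ j : Fin n, zf j w ^ a j * zbf j w ^ b j

/-- `R_m = ∏_j ζ_j^{m_j}`, with `ζ_j^{m_j} = z_j^{m_j}` for `m_j ≥ 0` and
`ζ_j^{m_j} = z̄_j^{−m_j}` for `m_j < 0`. -/
def Rm {n : ℕ} (m : Fin n → ℤ) (w : Phase n) : ℂ :=
  ∏ j : Fin n, if 0 ≤ m j then zf j w ^ (m j).toNat else zbf j w ^ (-(m j)).toNat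

/-- `w_i = z_i` if `ε_i = 1`, `w_i = z̄_i` if `ε_i = −1`. -/
def wfun {n : ℕ} (ε : Fin n → ℤ) (i : Fin n) (w : Phase n) : ℂ :=
  if ε i = 1 then zf i w else zbf i w

/-- `w̄_i`, the complex conjugate of `w_i`. -/
def wbfun {n : ℕ} (ε : Fin n → ℤ) (i : Fin n) (w : Phase n) : ℂ :=
  if ε i = 1 then zbf i w else zf i w

/-- `P_{ij} = i(w_i w̄_j − w_j w̄_i)` (complex-valued; its values are real). -/
def Pf {n : ℕ} (ε : Fin n → ℤ) (i j : Fin n) (w : Phase n) : ℂ :=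
  Complex.I * (wfun ε i w * wbfun ε j w - wfun ε j w * wbfun ε i w)

/-- `P_{ij}` as a real-valued function. -/
def PfR {n : ℕ} (ε : Fin n → ℤ) (i j : Fin n) (w : Phase n) : ℝ :=
  (Pf ε i j w).re


/-!
The bracket of `J_r` with any `g` is `-∑_t r_t dg(V_t)`, where `V_t = -p_t ∂_{x_t} + x_t ∂_{p_t}`
generates the rotation of the `(x_t, p_t)`-plane. That rotation multiplies `z_t` by `e^{iθ}` and
`z̄_t` by `e^{-iθ}`, so `R_m` picks up the factor `e^{i m_t θ}`, while `dJ_r(V_t) = 0`. Hence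
`{J_r, J_{r'}} = 0` and `{J_r, Im R_m} = -(r·m) Re R_m`, which vanishes for the central `r`.

For independence, work on the set where every `I_t` and every `Re R_{m^{(j)}}` is nonzero: it is
the nonvanishing set of an analytic function that equals `1` at `x = √2, p = 0`, hence open and
dense. There, evaluating a vanishing combination of the differentials on the `V_t` kills the
coefficients of the `Im R_{m^{(j)}}` (the `m^{(j)}` are independent), and evaluating it on the
radial fields `x_t ∂_{x_t} + p_t ∂_{p_t}`, where `dJ_r` equals `2 r_t I_t`, kills the rest.
-/

section

variable {n : ℕ}

@[fun_prop] lemma analyticAt_fst_apply {ι E : Type*} [Fintype ι] [NormedAddCommGroup E]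
    [NormedSpace ℝ E] (t : ι) (w : (ι → ℝ) × E) :
    AnalyticAt ℝ (fun w : (ι → ℝ) × E => w.1 t) w :=
  ((ContinuousLinearMap.proj t).comp (ContinuousLinearMap.fst ℝ _ _)).analyticAt w

@[fun_prop] lemma analyticAt_snd_apply {ι E : Type*} [Fintype ι] [NormedAddCommGroup E]
    [NormedSpace ℝ E] (t : ι) (w : E × (ι → ℝ)) :
    AnalyticAt ℝ (fun w : E × (ι → ℝ) => w.2 t) w :=
  ((ContinuousLinearMap.proj t).comp (ContinuousLinearMap.snd ℝ _ _)).analyticAt w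

@[fun_prop] lemma AnalyticAt.ofReal {E : Type*} [NormedAddCommGroup E] [NormedSpace ℝ E]
    {f : E → ℝ} {x : E} (hf : AnalyticAt ℝ f x) : AnalyticAt ℝ (fun x => (f x : ℂ)) x :=
  (Complex.ofRealCLM.analyticAt _).comp hf

lemma analyticAt_Rm (m : Fin n → ℤ) (w : Phase n) : AnalyticAt ℝ (Rm m) w := by
  refine Finset.analyticAt_fun_prod _ fun t _ => ?_
  split_ifs
  · unfold zf; fun_prop
  · unfold zbf; fun_prop

lemma analyticAt_IR (t : Fin n) (w : Phase n) : AnalyticAt ℝ (IR t) w := by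
  unfold IR; fun_prop

def Jr (r : Fin n → ℤ) (w : Phase n) : ℝ := ∑ t, (r t : ℝ) * IR t w

def radVec (w : Phase n) (t : Fin n) : Phase n := (Pi.single t (w.1 t), Pi.single t (w.2 t))

def rotVec (w : Phase n) (t : Fin n) : Phase n := (Pi.single t (-w.2 t), Pi.single t (w.1 t))

lemma hasFDerivAt_IR (t : Fin n) (w : Phase n) :
    HasFDerivAt (IR t) (w.1 t • (ContinuousLinearMap.proj t).comp (ContinuousLinearMap.fst ℝ _ _) +
      w.2 t • (ContinuousLinearMap.proj t).comp (ContinuousLinearMap.snd ℝ _ _)) w := by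
  have hx := ((ContinuousLinearMap.proj (R := ℝ) (φ := fun _ : Fin n => ℝ) t).comp
    (ContinuousLinearMap.fst ℝ (Fin n → ℝ) (Fin n → ℝ))).hasFDerivAt (x := w)
  have hp := ((ContinuousLinearMap.proj (R := ℝ) (φ := fun _ : Fin n => ℝ) t).comp
    (ContinuousLinearMap.snd ℝ (Fin n → ℝ) (Fin n → ℝ))).hasFDerivAt (x := w)
  have hIR : IR t = fun w : Phase n => 2⁻¹ * (w.1 t ^ 2 + w.2 t ^ 2) := by
    funext w; simp only [IR]; ring
  rw [hIR]
  refine (((hx.pow 2).add (hp.pow 2)).const_mul 2⁻¹).congr_fderiv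
    (ContinuousLinearMap.ext fun v => ?_)
  simp only [ContinuousLinearMap.comp_apply, ContinuousLinearMap.coe_fst',
    ContinuousLinearMap.proj_apply, Nat.add_one_sub_one, pow_one, nsmul_eq_mul, Nat.cast_ofNat,
    ContinuousLinearMap.coe_snd', smul_add, add_apply, smul_apply, smul_eq_mul]
  ring

lemma fderiv_Jr_apply (r : Fin n → ℤ) (w v : Phase n) :
    fderiv ℝ (Jr r) w v = ∑ t, (r t : ℝ) * (w.1 t * v.1 t + w.2 t * v.2 t) := by
  have h : HasFDerivAt (Jr r) _ w :=
    HasFDerivAt.fun_sum fun t _ => (hasFDerivAt_IR t w).const_mul (r t : ℝ)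
  rw [h.fderiv]
  simp [mul_add]

lemma fderiv_Jr_rotVec (r : Fin n → ℤ) (w : Phase n) (t : Fin n) :
    fderiv ℝ (Jr r) w (rotVec w t) = 0 := by
  rw [fderiv_Jr_apply]
  refine Finset.sum_eq_zero fun s _ => ?_
  by_cases h : s = t
  · subst h; simp only [rotVec, Pi.single_eq_same]; ring
  · simp [rotVec, h]

lemma fderiv_Jr_radVec (r : Fin n → ℤ) (w : Phase n) (t : Fin n) :
    fderiv ℝ (Jr r) w (radVec w t) = r t * (2 * IR t w) := by
  rw [fderiv_Jr_apply, Fintype.sum_eq_single t fun s h => by simp [radVec, h]]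
  simp only [radVec, Pi.single_eq_same, IR]; ring

lemma pbR_Jr (r : Fin n → ℤ) (g : Phase n → ℝ) (w : Phase n) :
    pbR (Jr r) g w = -∑ t, (r t : ℝ) * fderiv ℝ g w (rotVec w t) := by
  have hrot : ∀ t, rotVec w t =
      (-w.2 t) • (Pi.single t (1 : ℝ), (0 : Fin n → ℝ)) +
        w.1 t • ((0 : Fin n → ℝ), Pi.single t 1) := by
    intro t; ext s <;> by_cases h : s = t <;> simp [rotVec, h]
  simp only [pbR, fderiv_Jr_apply, hrot, map_add, map_smul, smul_eq_mul, ← Finset.sum_neg_distrib]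
  refine Finset.sum_congr rfl fun t _ => ?_
  simp only [Pi.zero_apply, mul_zero, Pi.single_apply, mul_ite, mul_one, zero_add,
    Finset.sum_ite_eq', Finset.mem_univ, if_true, add_zero, neg_mul]
  ring

lemma pbR_Jr_Jr (r r' : Fin n → ℤ) : pbR (Jr r) (Jr r') = 0 := by
  funext w
  simp [pbR_Jr, fderiv_Jr_rotVec]

/-- Rotation by the angle `θ` in the `(x_t, p_t)`-plane. -/
def rotate (t : Fin n) (θ : ℝ) (w : Phase n) : Phase n :=
  w + (Real.cos θ - 1) • radVec w t + Real.sin θ • rotVec w t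

lemma rotate_zero (t : Fin n) (w : Phase n) : rotate t 0 w = w := by
  simp [rotate]

lemma hasDerivAt_rotate (t : Fin n) (w : Phase n) :
    HasDerivAt (fun θ => rotate t θ w) (rotVec w t) 0 := by
  have h : HasDerivAt (fun θ => rotate t θ w)
      (-Real.sin 0 • radVec w t + Real.cos 0 • rotVec w t) 0 :=
    ((((Real.hasDerivAt_cos 0).sub_const 1).smul_const (radVec w t)).const_add w).add
      ((Real.hasDerivAt_sin 0).smul_const (rotVec w t))
  simpa using h

lemma zf_rotate (s t : Fin n) (θ : ℝ) (w : Phase n) :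
    zf s (rotate t θ w) = (if s = t then Complex.exp (θ * I) else 1) * zf s w := by
  by_cases h : s = t
  · subst h
    simp only [zf, rotate, radVec, rotVec, Prod.fst_add, Prod.snd_add, Prod.smul_mk, Pi.add_apply,
      Pi.smul_apply, Pi.single_eq_same, smul_eq_mul, if_true, Complex.exp_mul_I]
    push_cast
    linear_combination (-Complex.sin θ * w.2 s / (√2 : ℝ)) * I_sq
  · simp [zf, rotate, radVec, rotVec, h]

lemma zbf_rotate (s t : Fin n) (θ : ℝ) (w : Phase n) :
    zbf s (rotate t θ w) = (if s = t then Complex.exp (-(θ * I)) else 1) * zbf s w := by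
  by_cases h : s = t
  · subst h
    simp only [zbf, rotate, radVec, rotVec, Prod.fst_add, Prod.snd_add, Prod.smul_mk, Pi.add_apply,
      Pi.smul_apply, Pi.single_eq_same, smul_eq_mul, if_true, ← neg_mul, ← Complex.ofReal_neg,
      Complex.exp_mul_I]
    push_cast [Complex.cos_neg, Complex.sin_neg]
    linear_combination (-Complex.sin θ * w.2 s / (√2 : ℝ)) * I_sq
  · simp [zbf, rotate, radVec, rotVec, h]

lemma Rm_rotate (m : Fin n → ℤ) (t : Fin n) (θ : ℝ) (w : Phase n) :
    Rm m (rotate t θ w) = Complex.exp (m t * θ * I) * Rm m w := by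
  have hfactor : ∀ s, (if 0 ≤ m s then zf s (rotate t θ w) ^ (m s).toNat
      else zbf s (rotate t θ w) ^ (-m s).toNat) =
      (if s = t then Complex.exp (m t * θ * I) else 1) *
        (if 0 ≤ m s then zf s w ^ (m s).toNat else zbf s w ^ (-m s).toNat) := by
    intro s
    by_cases hs : s = t
    · rw [if_pos hs]
      subst hs
      split_ifs with hm
      · rw [zf_rotate, if_pos rfl, mul_pow, ← Complex.exp_nat_mul]
        congr 2
        have : ((m s).toNat : ℂ) = m s := by exact_mod_cast Int.toNat_of_nonneg hm
        rw [this]; ring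
      · rw [zbf_rotate, if_pos rfl, mul_pow, ← Complex.exp_nat_mul]
        congr 2
        have : ((-m s).toNat : ℂ) = -m s := by exact_mod_cast Int.toNat_of_nonneg (by omega)
        rw [this]; ring
    · simp [zf_rotate, zbf_rotate, hs]
  simp only [Rm, hfactor, Finset.prod_mul_distrib, Finset.prod_ite_eq', Finset.mem_univ, if_true]

lemma fderiv_apply_eq_of_hasDerivAt_comp {E F : Type*} [NormedAddCommGroup E] [NormedSpace ℝ E]
    [NormedAddCommGroup F] [NormedSpace ℝ F] {g : E → F} {γ : ℝ → E} {s : ℝ} {v : E} {a : F}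
    (hg : DifferentiableAt ℝ g (γ s)) (hγ : HasDerivAt γ v s) (h : HasDerivAt (g ∘ γ) a s) :
    fderiv ℝ g (γ s) v = a :=
  (hg.hasFDerivAt.comp_hasDerivAt s hγ).unique h

lemma fderiv_Rm_rotVec (m : Fin n → ℤ) (w : Phase n) (t : Fin n) :
    fderiv ℝ (Rm m) w (rotVec w t) = m t * I * Rm m w := by
  have hcurve : HasDerivAt (Rm m ∘ fun θ => rotate t θ w) (m t * I * Rm m w) 0 := by
    have hfun : (Rm m ∘ fun θ => rotate t θ w) = fun θ : ℝ => cexp (m t * θ * I) * Rm m w :=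
      funext fun θ => Rm_rotate m t θ w
    rw [hfun]
    exact ((((hasDerivAt_id (0 : ℝ)).ofReal_comp).const_mul (m t : ℂ)).mul_const I).cexp.mul_const
      (Rm m w) |>.congr_deriv (by simp)
  simpa [rotate_zero] using fderiv_apply_eq_of_hasDerivAt_comp
    (by rw [rotate_zero]; exact (analyticAt_Rm m w).differentiableAt) (hasDerivAt_rotate t w) hcurve

lemma fderiv_im_Rm_rotVec (m : Fin n → ℤ) (w : Phase n) (t : Fin n) :
    fderiv ℝ (fun w => (Rm m w).im) w (rotVec w t) = m t * (Rm m w).re := by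
  have h := (Complex.imCLM.hasFDerivAt (x := Rm m w)).comp w
    (analyticAt_Rm m w).differentiableAt.hasFDerivAt
  rw [show (fun w => (Rm m w).im) = Complex.imCLM ∘ Rm m from rfl, h.fderiv]
  simp [fderiv_Rm_rotVec]

lemma pbR_Jr_im_Rm (r m : Fin n → ℤ) :
    pbR (Jr r) (fun w => (Rm m w).im) = fun w => -((∑ t, r t * m t : ℤ) : ℝ) * (Rm m w).re := by
  funext w
  simp [pbR_Jr, fderiv_im_Rm_rotVec, Finset.sum_mul, mul_assoc]

lemma LinearIndependent.intCast {ι ι' : Type*} [Finite ι'] {v : ι → ι' → ℤ}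
    (hv : LinearIndependent ℤ v) : LinearIndependent ℝ fun i t => (v i t : ℝ) := by
  have h := (linearIndependent_algebraMap_comp_iff (S := ℝ)).mpr hv
  simp only [algebraMap_int_eq, eq_intCast, Function.comp_def] at h
  exact h

lemma linearIndependent_fderiv_Jr_im_Rm {ι κ : Type*} [Fintype ι] [Fintype κ]
    {r : ι → Fin n → ℤ} (hr : LinearIndependent ℤ r) {m : κ → Fin n → ℤ}
    (hm : LinearIndependent ℤ m) {w : Phase n} (hI : ∀ t, IR t w ≠ 0)
    (hR : ∀ j, (Rm (m j) w).re ≠ 0) :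
    LinearIndependent ℝ fun s =>
      fderiv ℝ (Sum.elim (fun i => Jr (r i)) (fun j w => (Rm (m j) w).im) s) w := by
  rw [Fintype.linearIndependent_iff]
  intro c hc
  have happ : ∀ v, ∑ i, c (.inl i) * fderiv ℝ (Jr (r i)) w v +
      ∑ j, c (.inr j) * fderiv ℝ (fun w => (Rm (m j) w).im) w v = 0 := by
    intro v
    simpa [Fintype.sum_sum_type] using congrArg (· v) hc
  have hcm : ∀ j, c (.inr j) = 0 := by
    have hsum : ∑ j, (c (.inr j) * (Rm (m j) w).re) • (fun t => (m j t : ℝ)) = 0 := by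
      funext t
      simpa [fderiv_Jr_rotVec, fderiv_im_Rm_rotVec, mul_comm, mul_left_comm, mul_assoc] using
        happ (rotVec w t)
    intro j
    exact (mul_eq_zero.mp (Fintype.linearIndependent_iff.mp hm.intCast _ hsum j)).resolve_right
      (hR j)
  have hcr : ∀ i, c (.inl i) = 0 := by
    have hsum : ∑ i, c (.inl i) • (fun t => (r i t : ℝ)) = 0 := by
      funext t
      have h := happ (radVec w t)
      simp only [hcm, zero_mul, Finset.sum_const_zero, add_zero, fderiv_Jr_radVec] at h
      have h2 : (∑ i, c (.inl i) * (r i t : ℝ)) * (2 * IR t w) = 0 := by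
        rw [← h, Finset.sum_mul]
        exact Finset.sum_congr rfl fun i _ => by ring
      simpa [hI t] using h2
    exact Fintype.linearIndependent_iff.mp hr.intCast _ hsum
  rintro (i | j)
  · exact hcr i
  · exact hcm j

lemma AnalyticOnNhd.dense_setOf_ne_zero {𝕜 E F : Type*} [NontriviallyNormedField 𝕜]
    [NormedAddCommGroup E] [NormedSpace 𝕜 E] [PreconnectedSpace E]
    [NormedAddCommGroup F] [NormedSpace 𝕜 F] {f : E → F} (hf : AnalyticOnNhd 𝕜 f Set.univ)
    {w₀ : E} (h₀ : f w₀ ≠ 0) : Dense {w | f w ≠ 0} := by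
  rw [dense_iff_inter_open]
  rintro V hV ⟨v, hv⟩
  by_contra hempty
  have hzero : f =ᶠ[nhds v] 0 := Filter.eventually_of_mem (hV.mem_nhds hv) fun u hu => by
    by_contra hne
    exact hempty ⟨u, hu, hne⟩
  exact h₀ (hf.eqOn_zero_of_preconnected_of_eventuallyEq_zero isPreconnected_univ
    (Set.mem_univ v) hzero (Set.mem_univ w₀))

def basePoint : Phase n := (fun _ => Real.sqrt 2, 0)

lemma IR_basePoint (t : Fin n) : IR t basePoint = 1 := by
  simp [IR, basePoint]

lemma Rm_basePoint (m : Fin n → ℤ) : Rm m basePoint = 1 := by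
  refine Finset.prod_eq_one fun t _ => ?_
  split_ifs <;> simp [zf, zbf, basePoint]

theorem functionallyIndependent_Jr_im_Rm {ι κ : Type*} [Fintype ι] [Fintype κ]
    {r : ι → Fin n → ℤ} (hr : LinearIndependent ℤ r) {m : κ → Fin n → ℤ}
    (hm : LinearIndependent ℤ m) :
    FunctionallyIndependent (Sum.elim (fun i => Jr (r i)) (fun j w => (Rm (m j) w).im)) := by
  set g : Phase n → ℝ := fun w => (∏ t, IR t w) * ∏ j, (Rm (m j) w).re
  have hg : AnalyticOnNhd ℝ g Set.univ := fun w _ =>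
    (Finset.analyticAt_fun_prod _ fun t _ => analyticAt_IR t w).mul
      (Finset.analyticAt_fun_prod _ fun j _ =>
        (Complex.reCLM.analyticAt _).comp (analyticAt_Rm (m j) w))
  refine ⟨{w | g w ≠ 0}, isOpen_ne_fun hg.continuous continuous_const,
    hg.dense_setOf_ne_zero (w₀ := basePoint) (by simp [g, IR_basePoint, Rm_basePoint]),
    fun w hw => ?_⟩
  simp only [g, Set.mem_ofPred_eq, mul_ne_zero_iff, Finset.prod_ne_zero_iff, Finset.mem_univ,
    true_implies] at hw
  exact linearIndependent_fderiv_Jr_im_Rm hr hm hw.1 hw.2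

end

/-- the functions `F_i = J_{r^{(i)}}` (`i = 1,…,n`) and
`F_{n+j} = Im R_{m^{(j)}}` (`j = 1,…,n−k`) form an integrable set of `2n−k` functions
whose `k` central elements are `J_{r^{(1)}}, …, J_{r^{(k)}}`. -/
theorem statement4 (n k : ℕ)
    (r : Fin n → Fin n → ℤ) (hr : LinearIndependent ℤ r)
    (m : Fin (n - k) → Fin n → ℤ) (hm : LinearIndependent ℤ m)
    (horth : ∀ i : Fin n, (i : ℕ) < k → ∀ j : Fin (n - k), ∑ t : Fin n, r i t * m j t = 0)
    (F : Fin n ⊕ Fin (n - k) → Phase n → ℝ)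
    (hF : F = Sum.elim (fun i w => ∑ t : Fin n, (r i t : ℝ) * IR t w)
      (fun j w => (Rm (m j) w).im)) :
    (∀ i : Fin n, (i : ℕ) < k → ∀ s : Fin n ⊕ Fin (n - k), pbR (F (Sum.inl i)) (F s) = 0) ∧
    FunctionallyIndependent F := by
  subst hF
  refine ⟨fun i hi s => ?_, functionallyIndependent_Jr_im_Rm hr hm⟩
  cases s with
  | inl i' => exact pbR_Jr_Jr (r i) (r i')
  | inr j =>
    change pbR (Jr (r i)) (fun w => (Rm (m j) w).im) = 0
    rw [pbR_Jr_im_Rm, horth i hi j]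
    funext w
    simp
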